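/- Let α = β + γ be a vector of Z^{1,9} with α·ω_0 = 0, α^2 = -2 and m := ω_d·α satisfying 1 ≤ m ≤ d-1, where β ∈ Z^{1,n} = span(h, e_1,...,e_n) and γ ∈ Z^d = span(e_{n+1},...,e_9), n = 9-d. Then γ = -Σ_{i∈I} e_i for some m-element subset I of {n+1,...,9}; in particular γ^2 = -m and β^2 = m - 2. -/

import Mathlib

/-!
Write `α = β + γ` along `Z^{1,9} = Z^{1,n} ⊕ Z^d`. Since `ω_d² = d > 0`, the form is negative
definite on `ω_d^⊥ ∩ Z^{1,n}`, whence the reverse Cauchy–Schwarz inequality `d β² ≤ (ω_d·β)² = m²`;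
with `m ≤ d - 1` this forces `β² < m`. As `ω_0` is characteristic, `β² ≡ m (mod 2)`, so `β² ≤ m - 2`
and `γ² = -2 - β² ≥ -m = ω_0·γ`. Coordinatewise this reads `∑ (γ_i² + γ_i) ≤ 0`, and each summand
is nonnegative, so every `γ_i` is `0` or `-1`.
-/

open Finset

/-- The lattice `Z^{1,9}` as integer vectors indexed by `Fin 10`:
coordinate `0` is `h`, coordinates `1,…,9` are `e_1,…,e_9`. -/
abbrev V : Type := Fin 10 → ℤ

/-- The Minkowski bilinear form: `h·h = 1`, `e_i·e_i = -1`, distinct basis vectors orthogonal. -/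
def form (v w : V) : ℤ := v 0 * w 0 - ∑ i : Fin 9, v i.succ * w i.succ

/-- The basis vector `h`. -/
def hvec : V := Pi.single 0 1

/-- The basis vector `e_{i+1}` (so `evec i` for `i : Fin 9` is `e_1,…,e_9`). -/
def evec (i : Fin 9) : V := Pi.single i.succ 1

/-- `ω_d = 3h - (e_1 + … + e_n)`, recorded as a function of `n`. -/
def omegaV (n : ℕ) : V :=
  (3 : ℤ) • hvec - ∑ i ∈ Finset.univ.filter (fun i : Fin 9 => (i : ℕ) < n), evec i

/-- `ω_0 = 3h - (e_1 + … + e_9)`. -/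
def omega0 : V := omegaV 9

/-- `β` lies in `Z^{1,n}`, the span of `h, e_1, …, e_n`. -/
def inSpan1 (n : ℕ) (v : V) : Prop := ∀ j : Fin 10, n < (j : ℕ) → v j = 0

/-- `γ` lies in `Z^d`, the span of `e_{n+1}, …, e_9`. -/
def inSpan2 (n : ℕ) (v : V) : Prop := ∀ j : Fin 10, (j : ℕ) ≤ n → v j = 0

lemma hvec_zero : hvec 0 = 1 := rfl

lemma hvec_succ (k : Fin 9) : hvec k.succ = 0 := by
  simp [hvec, Fin.succ_ne_zero k]

lemma evec_zero (i : Fin 9) : evec i 0 = 0 := by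
  simp [evec, (Fin.succ_ne_zero i).symm]

lemma evec_succ (i k : Fin 9) : evec i k.succ = if k = i then 1 else 0 := by
  simp [evec, Pi.single_apply, Fin.succ_inj]

lemma omegaV_zero (n : ℕ) : omegaV n 0 = 3 := by
  simp [omegaV, evec_zero, hvec_zero]

lemma omegaV_succ (n : ℕ) (k : Fin 9) :
    omegaV n k.succ = if (k : ℕ) < n then -1 else 0 := by
  simp only [omegaV, Pi.sub_apply, Pi.smul_apply, hvec_succ, Finset.sum_apply, evec_succ,
    smul_zero, zero_sub, Finset.sum_ite_eq]
  split_ifs <;> simp_all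

lemma form_comm (v w : V) : form v w = form w v := by
  simp only [form, mul_comm]

lemma form_add_left (u v w : V) : form (u + v) w = form u w + form v w := by
  simp only [form, Pi.add_apply, add_mul, Finset.sum_add_distrib]
  ring

lemma form_add_right (u v w : V) : form u (v + w) = form u v + form u w := by
  rw [form_comm, form_add_left, form_comm v, form_comm w]

lemma form_zero_right (v : V) : form v 0 = 0 := by
  simp [form]

lemma form_self (v : V) : form v v = v 0 ^ 2 - ∑ i : Fin 9, v i.succ ^ 2 := by
  simp only [form, sq]

lemma form_omegaV_right (v : V) (n : ℕ) :
    form v (omegaV n) =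
      3 * v 0 + ∑ i ∈ univ.filter (fun i : Fin 9 => (i : ℕ) < n), v i.succ := by
  simp only [form, omegaV_zero, omegaV_succ, mul_ite, mul_neg, mul_one, mul_zero,
    ← Finset.sum_filter, Finset.sum_neg_distrib]
  ring

lemma form_omega0_right (v : V) : form v omega0 = 3 * v 0 + ∑ i : Fin 9, v i.succ := by
  rw [omega0, form_omegaV_right, Finset.filter_true_of_mem fun i _ => i.isLt]

lemma omegaV_inSpan1 (n : ℕ) : inSpan1 n (omegaV n) := by
  intro j hj
  induction j using Fin.cases with
  | zero => simp at hj
  | succ k =>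
    rw [omegaV_succ, if_neg]
    simp only [Fin.val_succ] at hj
    omega

lemma form_congr_right_of_inSpan1 {n : ℕ} {β w w' : V} (hβ : inSpan1 n β)
    (h : ∀ j : Fin 10, (j : ℕ) ≤ n → w j = w' j) : form β w = form β w' := by
  have hcoord : ∀ j, β j * w j = β j * w' j := fun j => by
    rcases le_or_gt (j : ℕ) n with hj | hj
    · rw [h j hj]
    · rw [hβ j hj, zero_mul, zero_mul]
  simp only [form, hcoord]

lemma form_eq_zero_of_inSpan1_of_inSpan2 {n : ℕ} {β γ : V} (hβ : inSpan1 n β)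
    (hγ : inSpan2 n γ) : form β γ = 0 := by
  rw [form_congr_right_of_inSpan1 (w' := 0) hβ hγ, form_zero_right]

lemma form_omega0_of_inSpan1 {n : ℕ} {β : V} (hβ : inSpan1 n β) :
    form β omega0 = form β (omegaV n) := by
  refine form_congr_right_of_inSpan1 hβ fun j hj => ?_
  induction j using Fin.cases with
  | zero => rw [omega0, omegaV_zero, omegaV_zero]
  | succ k =>
    simp only [Fin.val_succ] at hj
    rw [omega0, omegaV_succ, omegaV_succ, if_pos k.isLt, if_pos (by omega)]

lemma form_self_modEq_form_omega0 (v : V) : form v v ≡ form v omega0 [ZMOD 2] := by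
  have hdiff : form v omega0 - form v v =
      ∑ i : Fin 9, v i.succ * (v i.succ + 1) - ((v 0 - 1) * (v 0 - 1 + 1) - 2 * v 0) := by
    simp only [form_omega0_right, form_self, mul_add, mul_one, ← sq, Finset.sum_add_distrib]
    ring
  refine Int.modEq_iff_dvd.mpr (hdiff ▸ dvd_sub ?_ (dvd_sub ?_ (dvd_mul_right 2 _)))
  · exact Finset.dvd_sum fun i _ => (Int.even_mul_succ_self _).two_dvd
  · exact (Int.even_mul_succ_self _).two_dvd

/-- The coordinate form of `d β² ≤ (ω_d·β)²`, with `a = β₀`, `s = ∑ βᵢ`, `q = ∑ βᵢ²` over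
`e_1, …, e_n`: multiplied by `n`, the difference is `(n a + 3 s)² + d (n q - s²)`. -/
lemma mul_sub_le_sq_of_sq_le_mul {n d : ℤ} (hnd : n + d = 9) (hn : 0 ≤ n) (hd : 0 ≤ d)
    {a s q : ℤ} (hCS : s ^ 2 ≤ n * q) (hq : 0 ≤ q) : d * (a ^ 2 - q) ≤ (3 * a + s) ^ 2 := by
  have key : n * ((3 * a + s) ^ 2 - d * (a ^ 2 - q)) =
      (n * a + 3 * s) ^ 2 + d * (n * q - s ^ 2) := by
    rw [show d = 9 - n by omega]
    ring
  rcases hn.eq_or_lt with rfl | hn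
  · obtain rfl : s = 0 := pow_eq_zero_iff two_ne_zero |>.mp (by nlinarith [sq_nonneg s])
    nlinarith
  · nlinarith [sq_nonneg (n * a + 3 * s), mul_nonneg hd (sub_nonneg.mpr hCS)]

lemma mul_form_self_le_form_omegaV_sq {n d : ℕ} (hnd : n + d = 9) {β : V}
    (hβ : inSpan1 n β) : (d : ℤ) * form β β ≤ form β (omegaV n) ^ 2 := by
  rw [form_omegaV_right]
  set T : Finset (Fin 9) := univ.filter (fun i : Fin 9 => (i : ℕ) < n)
  have hT : ∀ i : Fin 9, β i.succ ≠ 0 → (i : ℕ) < n := fun i hi => by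
    by_contra hiT
    exact hi (hβ i.succ (by simp only [Fin.val_succ]; omega))
  have hcard : (#T : ℤ) = n := by
    simp only [T, Fin.card_filter_val_lt]
    omega
  have hself : form β β = β 0 ^ 2 - ∑ i ∈ T, β i.succ ^ 2 := by
    rw [form_self,
      ← Finset.sum_filter_of_ne fun i _ hi => hT i (pow_ne_zero_iff two_ne_zero |>.mp hi)]
  have hCS := sq_sum_le_card_mul_sum_sq (s := T) (f := fun i => β i.succ)
  have hq : 0 ≤ ∑ i ∈ T, β i.succ ^ 2 := Finset.sum_nonneg fun i _ => sq_nonneg _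
  rw [hcard] at hCS
  rw [hself]
  exact mul_sub_le_sq_of_sq_le_mul (by omega) (by positivity) (by positivity) hCS hq

lemma le_sub_two_of_mul_le_sq {d m b : ℤ} (hm : 1 ≤ m) (hmd : m ≤ d - 1) (hb : d * b ≤ m ^ 2)
    (hpar : b ≡ m [ZMOD 2]) : b ≤ m - 2 := by
  have hlt : b < m := by
    by_contra! hmb
    nlinarith [mul_le_mul_of_nonneg_left hmb (by omega : (0 : ℤ) ≤ d)]
  rw [Int.ModEq] at hpar
  omega

lemma sq_add_self_nonneg (x : ℤ) : 0 ≤ x ^ 2 + x := by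
  rcases le_or_gt 0 x with hx | hx <;> nlinarith

lemma neg_sum_evec_zero (I : Finset (Fin 9)) : (-∑ i ∈ I, evec i) 0 = 0 := by
  simp [evec_zero]

lemma neg_sum_evec_succ (I : Finset (Fin 9)) (k : Fin 9) :
    (-∑ i ∈ I, evec i) k.succ = if k ∈ I then -1 else 0 := by
  simp [evec_succ, apply_ite]

lemma eq_neg_sum_evec_of_form_omega0_le {γ : V} (hγ0 : γ 0 = 0)
    (h : form γ omega0 ≤ form γ γ) :
    γ = -∑ i ∈ univ.filter (fun i : Fin 9 => γ i.succ = -1), evec i := by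
  have hsum : ∑ i : Fin 9, (γ i.succ ^ 2 + γ i.succ) = 0 := by
    rw [form_omega0_right, form_self, hγ0] at h
    refine le_antisymm ?_ (Finset.sum_nonneg fun i _ => sq_add_self_nonneg _)
    rw [Finset.sum_add_distrib]
    linarith
  have hcoord : ∀ i : Fin 9, γ i.succ = 0 ∨ γ i.succ = -1 := fun i => by
    have hi := (Finset.sum_eq_zero_iff_of_nonneg fun i _ => sq_add_self_nonneg (γ i.succ)).mp
      hsum i (Finset.mem_univ i)
    have : γ i.succ * (γ i.succ + 1) = 0 := by linear_combination hi
    rcases mul_eq_zero.mp this with h0 | h1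
    · exact Or.inl h0
    · exact Or.inr (by omega)
  funext j
  induction j using Fin.cases with
  | zero => rw [neg_sum_evec_zero, hγ0]
  | succ k =>
    rw [neg_sum_evec_succ]
    rcases hcoord k with hk | hk <;> simp [hk]

lemma form_neg_sum_evec_omega0 (I : Finset (Fin 9)) :
    form (-∑ i ∈ I, evec i) omega0 = -#I := by
  rw [form_omega0_right, neg_sum_evec_zero]
  simp only [neg_sum_evec_succ]
  simp [Finset.sum_ite_mem]

lemma form_neg_sum_evec_self (I : Finset (Fin 9)) :
    form (-∑ i ∈ I, evec i) (-∑ i ∈ I, evec i) = -#I := by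
  rw [form_self, neg_sum_evec_zero]
  simp only [neg_sum_evec_succ]
  simp [Finset.sum_ite_mem]

theorem stmt_6_general (d : ℕ) (hd8 : d ≤ 8) (n : ℕ) (hn : n = 9 - d)
    (α β γ : V) (hβ : inSpan1 n β) (hγ : inSpan2 n γ) (hαβγ : α = β + γ)
    (h0 : form α omega0 = 0) (h2 : form α α = -2)
    (m : ℤ) (hm : m = form (omegaV n) α) (hm1 : 1 ≤ m) (hm2 : m ≤ (d : ℤ) - 1) :
    (∃ I : Finset (Fin 9), (∀ i ∈ I, n ≤ (i : ℕ)) ∧ (I.card : ℤ) = m ∧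
      γ = -∑ i ∈ I, evec i) ∧
    form γ γ = -m ∧ form β β = m - 2 := by
  have hmβ : m = form β (omegaV n) := by
    rw [hm, form_comm, hαβγ, form_add_left, form_comm γ,
      form_eq_zero_of_inSpan1_of_inSpan2 (omegaV_inSpan1 n) hγ, add_zero]
  have hγω : form γ omega0 = -m := by
    rw [hαβγ, form_add_left, form_omega0_of_inSpan1 hβ, ← hmβ] at h0
    linarith
  have hαα : form α α = form β β + form γ γ := by
    rw [hαβγ, form_add_left, form_add_right, form_add_right, form_comm γ β,
      form_eq_zero_of_inSpan1_of_inSpan2 hβ hγ]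
    ring
  have hββ : form β β ≤ m - 2 := by
    refine le_sub_two_of_mul_le_sq hm1 hm2
      (hmβ ▸ mul_form_self_le_form_omegaV_sq (by omega) hβ) ?_
    exact hmβ ▸ form_omega0_of_inSpan1 hβ ▸ form_self_modEq_form_omega0 β
  set I := univ.filter (fun i : Fin 9 => γ i.succ = -1)
  have hγI : γ = -∑ i ∈ I, evec i :=
    eq_neg_sum_evec_of_form_omega0_le (hγ 0 (Nat.zero_le n)) (by linarith)
  have hI : (#I : ℤ) = m := by
    rw [hγI, form_neg_sum_evec_omega0] at hγω
    linarith
  have hγγ : form γ γ = -m := by rw [hγI, form_neg_sum_evec_self, hI]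
  refine ⟨⟨I, fun i hi => ?_, hI, hγI⟩, hγγ, by linarith⟩
  have hi' : γ i.succ ≠ 0 := by
    rw [(Finset.mem_filter.mp hi).2]
    norm_num
  by_contra! hin
  exact hi' (hγ i.succ (by simp only [Fin.val_succ]; omega))

/-- if `α = β + γ` is a real root with `m = ω_d·α` and `1 ≤ m ≤ d-1`,
then `γ = -Σ_{i ∈ I} e_i` for an `m`-element subset `I` of `{n+1,…,9}`;
in particular `γ² = -m` and `β² = m - 2`. -/
theorem stmt_6 (d : ℕ) (hd2 : 2 ≤ d) (hd8 : d ≤ 8) (n : ℕ) (hn : n = 9 - d)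
    (α β γ : V) (hβ : inSpan1 n β) (hγ : inSpan2 n γ) (hαβγ : α = β + γ)
    (h0 : form α omega0 = 0) (h2 : form α α = -2)
    (m : ℤ) (hm : m = form (omegaV n) α) (hm1 : 1 ≤ m) (hm2 : m ≤ (d : ℤ) - 1) :
    (∃ I : Finset (Fin 9), (∀ i ∈ I, n ≤ (i : ℕ)) ∧ (I.card : ℤ) = m ∧
      γ = -∑ i ∈ I, evec i) ∧
    form γ γ = -m ∧ form β β = m - 2 :=
  stmt_6_general d hd8 n hn α β γ hβ hγ hαβγ h0 h2 m hm hm1 hm2
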